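/- With W = V ⊥ P, φ: C(W) → M₂(C(V)) the Vahlen isomorphism, and Pin⁺(W) = {x ∈ Γ(W) : x·x̄ = 1}, a matrix A = [[a,b],[c,d]] ∈ M₂(C(V)) belongs to 𝒱⁺(V) = φ(Pin⁺(W)) if and only if: (1') ad* − bc* = d*a − b*c = 1; (2) ba* − ab* = cd* − dc* = 0; (3) a*c − c*a = d*b − b*d = 0; (4) aā, bb̄, cc̄, dd̄ are scalars; (5) bd̄ and ac̄ lie in V; (6) avb̄ + bv̄ā and cvd̄ + dv̄c̄ are scalars for all v ∈ V; (7) avd̄ + bv̄c̄ lies in V for all v ∈ V. Moreover A ∈ φ(Pin⁺(W) ∩ C⁰(W)) if in addition a,d ∈ C⁰(V) and b,c ∈ C¹(V). -/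
import Mathlib


open CliffordAlgebra

/-- The conditions (1')–(7) of Theorem `vahlenfurther` on a matrix
`A = [[a,b],[c,d]] ∈ M₂(C(V))`, with (1') `ad* - bc* = d*a - b*c = 1`.
Here `x* = reverse x` and `x̄ = involute (reverse x)`, and `a = A 0 0`,
`b = A 0 1`, `c = A 1 0`, `d = A 1 1`. -/
def VahlenCondsOne {F : Type*} [Field F] {V : Type*} [AddCommGroup V] [Module F V]
    (Q : QuadraticForm F V) (A : Matrix (Fin 2) (Fin 2) (CliffordAlgebra Q)) : Prop :=
  (A 0 0 * reverse (A 1 1) - A 0 1 * reverse (A 1 0) = 1 ∧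
   reverse (A 1 1) * A 0 0 - reverse (A 0 1) * A 1 0 = 1) ∧
  (A 0 1 * reverse (A 0 0) - A 0 0 * reverse (A 0 1) = 0 ∧
   A 1 0 * reverse (A 1 1) - A 1 1 * reverse (A 1 0) = 0) ∧
  (reverse (A 0 0) * A 1 0 - reverse (A 1 0) * A 0 0 = 0 ∧
   reverse (A 1 1) * A 0 1 - reverse (A 0 1) * A 1 1 = 0) ∧
  ((∃ s : F, A 0 0 * involute (reverse (A 0 0)) = algebraMap F (CliffordAlgebra Q) s) ∧
   (∃ s : F, A 0 1 * involute (reverse (A 0 1)) = algebraMap F (CliffordAlgebra Q) s) ∧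
   (∃ s : F, A 1 0 * involute (reverse (A 1 0)) = algebraMap F (CliffordAlgebra Q) s) ∧
   (∃ s : F, A 1 1 * involute (reverse (A 1 1)) = algebraMap F (CliffordAlgebra Q) s)) ∧
  ((∃ v : V, A 0 1 * involute (reverse (A 1 1)) = ι Q v) ∧
   (∃ v : V, A 0 0 * involute (reverse (A 1 0)) = ι Q v)) ∧
  (∀ v : V,
    (∃ s : F, A 0 0 * ι Q v * involute (reverse (A 0 1)) +
        A 0 1 * involute (reverse (ι Q v)) * involute (reverse (A 0 0))
        = algebraMap F (CliffordAlgebra Q) s) ∧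
    (∃ s : F, A 1 0 * ι Q v * involute (reverse (A 1 1)) +
        A 1 1 * involute (reverse (ι Q v)) * involute (reverse (A 1 0))
        = algebraMap F (CliffordAlgebra Q) s)) ∧
  (∀ v : V, ∃ w : V,
    A 0 0 * ι Q v * involute (reverse (A 1 1)) +
      A 0 1 * involute (reverse (ι Q v)) * involute (reverse (A 1 0)) = ι Q w)

namespace VahlenAux

variable {F : Type*} [Field F] {V : Type*} [AddCommGroup V] [Module F V]
  {Q : QuadraticForm F V}

def bar (x : CliffordAlgebra Q) : CliffordAlgebra Q := involute (reverse x)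

@[simp] lemma bar_mul (x y : CliffordAlgebra Q) : bar (x * y) = bar y * bar x := by
  simp [bar, reverse.map_mul]
@[simp] lemma bar_bar (x : CliffordAlgebra Q) : bar (bar x) = x := by
  simp [bar, ← reverse_involute]
@[simp] lemma bar_add (x y : CliffordAlgebra Q) : bar (x + y) = bar x + bar y := by simp [bar]
@[simp] lemma bar_ι (v : V) : bar (ι Q v) = - ι Q v := by simp [bar]
@[simp] lemma bar_algebraMap (r : F) :
    bar (algebraMap F (CliffordAlgebra Q) r) = algebraMap F (CliffordAlgebra Q) r := by simp [bar]
@[simp] lemma bar_one : bar (1 : CliffordAlgebra Q) = 1 := by simp [bar]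
@[simp] lemma bar_zero : bar (0 : CliffordAlgebra Q) = 0 := by simp [bar]
@[simp] lemma bar_neg (x : CliffordAlgebra Q) : bar (-x) = - bar x := by simp [bar]
@[simp] lemma involute_bar (x : CliffordAlgebra Q) : involute (bar x) = reverse x := by simp [bar]
@[simp] lemma bar_involute (x : CliffordAlgebra Q) : bar (involute x) = reverse x := by
  simp [bar, reverse_involute]

def iMat (A : Matrix (Fin 2) (Fin 2) (CliffordAlgebra Q)) :
    Matrix (Fin 2) (Fin 2) (CliffordAlgebra Q) :=
  !![involute (A 0 0), -involute (A 0 1); -involute (A 1 0), involute (A 1 1)]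

def rMat (A : Matrix (Fin 2) (Fin 2) (CliffordAlgebra Q)) :
    Matrix (Fin 2) (Fin 2) (CliffordAlgebra Q) :=
  !![bar (A 1 1), bar (A 0 1); bar (A 1 0), bar (A 0 0)]

lemma rMat_00 (A : Matrix (Fin 2) (Fin 2) (CliffordAlgebra Q)) :
    rMat A 0 0 = involute (reverse (A 1 1)) := rfl
lemma rMat_01 (A : Matrix (Fin 2) (Fin 2) (CliffordAlgebra Q)) :
    rMat A 0 1 = involute (reverse (A 0 1)) := rfl
lemma rMat_10 (A : Matrix (Fin 2) (Fin 2) (CliffordAlgebra Q)) :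
    rMat A 1 0 = involute (reverse (A 1 0)) := rfl
lemma rMat_11 (A : Matrix (Fin 2) (Fin 2) (CliffordAlgebra Q)) :
    rMat A 1 1 = involute (reverse (A 0 0)) := rfl

lemma conj_conj (x : CliffordAlgebra Q) :
    involute (reverse (involute (reverse x))) = x := bar_bar x

lemma iMat_mul (A B : Matrix (Fin 2) (Fin 2) (CliffordAlgebra Q)) :
    iMat (A * B) = iMat A * iMat B := by
  ext i j
  fin_cases i <;> fin_cases j <;>
    simp [iMat, Matrix.mul_apply, Fin.sum_univ_two, map_add] <;> abel

lemma rMat_mul (A B : Matrix (Fin 2) (Fin 2) (CliffordAlgebra Q)) :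
    rMat (A * B) = rMat B * rMat A := by
  ext i j
  fin_cases i <;> fin_cases j <;>
    simp [rMat, Matrix.mul_apply, Fin.sum_univ_two] <;> abel

lemma iMat_add (A B : Matrix (Fin 2) (Fin 2) (CliffordAlgebra Q)) :
    iMat (A + B) = iMat A + iMat B := by
  ext i j; fin_cases i <;> fin_cases j <;> simp [iMat] <;> abel

lemma rMat_add (A B : Matrix (Fin 2) (Fin 2) (CliffordAlgebra Q)) :
    rMat (A + B) = rMat A + rMat B := by
  ext i j; fin_cases i <;> fin_cases j <;> simp [rMat] <;> abel

lemma iMat_algebraMap (r : F) : iMat (algebraMap F (Matrix (Fin 2) (Fin 2) (CliffordAlgebra Q)) r)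
    = algebraMap F (Matrix (Fin 2) (Fin 2) (CliffordAlgebra Q)) r := by
  ext i j
  fin_cases i <;> fin_cases j <;>
    simp [iMat, Matrix.algebraMap_eq_diagonal, Matrix.diagonal]

lemma rMat_algebraMap (r : F) : rMat (algebraMap F (Matrix (Fin 2) (Fin 2) (CliffordAlgebra Q)) r)
    = algebraMap F (Matrix (Fin 2) (Fin 2) (CliffordAlgebra Q)) r := by
  ext i j
  fin_cases i <;> fin_cases j <;>
    simp [rMat, Matrix.algebraMap_eq_diagonal, Matrix.diagonal]

section G
variable {QW : QuadraticForm F (V × F × F)}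

lemma g_involute (g : CliffordAlgebra QW →ₐ[F] Matrix (Fin 2) (Fin 2) (CliffordAlgebra Q))
    (hg : ∀ (v : V) (l₁ l₂ : F),
      g (ι QW (v, l₁, l₂)) = !![ι Q v, algebraMap F (CliffordAlgebra Q) l₁;
        algebraMap F (CliffordAlgebra Q) l₂, -(ι Q v)])
    (x : CliffordAlgebra QW) : g (involute x) = iMat (g x) := by
  induction x using CliffordAlgebra.induction with
  | algebraMap r => simp [iMat_algebraMap]
  | ι w =>
      obtain ⟨v, l1, l2⟩ := w
      rw [involute_ι, map_neg, hg]
      ext i j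
      fin_cases i <;> fin_cases j <;> simp [iMat]
  | mul a b ha hb => rw [map_mul, map_mul, ha, hb, map_mul, iMat_mul]
  | add a b ha hb => rw [map_add, map_add, ha, hb, map_add, iMat_add]

lemma g_reverse (g : CliffordAlgebra QW →ₐ[F] Matrix (Fin 2) (Fin 2) (CliffordAlgebra Q))
    (hg : ∀ (v : V) (l₁ l₂ : F),
      g (ι QW (v, l₁, l₂)) = !![ι Q v, algebraMap F (CliffordAlgebra Q) l₁;
        algebraMap F (CliffordAlgebra Q) l₂, -(ι Q v)])
    (x : CliffordAlgebra QW) : g (reverse x) = rMat (g x) := by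
  induction x using CliffordAlgebra.induction with
  | algebraMap r => simp [rMat_algebraMap]
  | ι w =>
      obtain ⟨v, l1, l2⟩ := w
      rw [reverse_ι, hg]
      ext i j
      fin_cases i <;> fin_cases j <;> simp [rMat]
  | mul a b ha hb => rw [reverse.map_mul, map_mul, ha, hb, map_mul, rMat_mul]
  | add a b ha hb => rw [map_add, map_add, ha, hb, map_add, rMat_add]

lemma g_bar (g : CliffordAlgebra QW →ₐ[F] Matrix (Fin 2) (Fin 2) (CliffordAlgebra Q))
    (hg : ∀ (v : V) (l₁ l₂ : F),
      g (ι QW (v, l₁, l₂)) = !![ι Q v, algebraMap F (CliffordAlgebra Q) l₁;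
        algebraMap F (CliffordAlgebra Q) l₂, -(ι Q v)])
    (x : CliffordAlgebra QW) :
    g (involute (reverse x)) = iMat (rMat (g x)) := by
  rw [g_involute g hg, g_reverse g hg]

end G

set_option maxHeartbeats 1000000 in
/-- the four entries of `A * !![ιv, l1; l2, -ιv] * B`. -/
lemma mul3_entries (A B : Matrix (Fin 2) (Fin 2) (CliffordAlgebra Q)) (v : V) (l1 l2 : F) :
    ((A * !![ι Q v, algebraMap F (CliffordAlgebra Q) l1;
        algebraMap F (CliffordAlgebra Q) l2, -(ι Q v)] * B) 0 0
      = A 0 0 * ι Q v * B 0 0 - A 0 1 * ι Q v * B 1 0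
        + l2 • (A 0 1 * B 0 0) + l1 • (A 0 0 * B 1 0)) ∧
    ((A * !![ι Q v, algebraMap F (CliffordAlgebra Q) l1;
        algebraMap F (CliffordAlgebra Q) l2, -(ι Q v)] * B) 0 1
      = A 0 0 * ι Q v * B 0 1 - A 0 1 * ι Q v * B 1 1
        + l2 • (A 0 1 * B 0 1) + l1 • (A 0 0 * B 1 1)) ∧
    ((A * !![ι Q v, algebraMap F (CliffordAlgebra Q) l1;
        algebraMap F (CliffordAlgebra Q) l2, -(ι Q v)] * B) 1 0
      = A 1 0 * ι Q v * B 0 0 - A 1 1 * ι Q v * B 1 0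
        + l2 • (A 1 1 * B 0 0) + l1 • (A 1 0 * B 1 0)) ∧
    ((A * !![ι Q v, algebraMap F (CliffordAlgebra Q) l1;
        algebraMap F (CliffordAlgebra Q) l2, -(ι Q v)] * B) 1 1
      = A 1 0 * ι Q v * B 0 1 - A 1 1 * ι Q v * B 1 1
        + l2 • (A 1 1 * B 0 1) + l1 • (A 1 0 * B 1 1)) := by
  refine ⟨?_, ?_, ?_, ?_⟩ <;>
  · simp only [Matrix.mul_apply, Fin.sum_univ_two]
    norm_num [Algebra.algebraMap_eq_smul_one, smul_mul_assoc, mul_smul_comm, mul_add, add_mul,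
      sub_eq_add_neg]
    abel

end VahlenAux

open VahlenAux in
set_option maxHeartbeats 2000000 in
/-- Characterization of `𝒱⁺(V) = φ(Pin⁺(W))` inside `M₂(C(V))` by conditions
(1')–(7), where `Pin⁺(W) = {x ∈ Γ(W) : x·x̄ = 1}`; moreover if also the parity
condition (8) holds then `A ∈ φ(Pin⁺(W) ∩ C⁰(W))`. -/
theorem stmt_12 {F : Type*} [Field F] (hchar : (2 : F) ≠ 0)
    {V : Type*} [AddCommGroup V] [Module F V] [FiniteDimensional F V]
    (S : LinearMap.BilinForm F V) (hS : ∀ x y, S x y = S y x)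
    (hnd : ∀ x : V, (∀ y : V, S x y = 0) → x = 0)
    (Q : QuadraticForm F V) (hQ : ∀ v, Q v = -(S v v))
    (QW : QuadraticForm F (V × F × F))
    (hQW : ∀ p : V × F × F, QW p = -(S p.1 p.1 - p.2.1 * p.2.2))
    (g : CliffordAlgebra QW →ₐ[F] Matrix (Fin 2) (Fin 2) (CliffordAlgebra Q))
    (hg : ∀ (v : V) (l₁ l₂ : F),
      g (ι QW (v, l₁, l₂)) = !![ι Q v, algebraMap F (CliffordAlgebra Q) l₁;
        algebraMap F (CliffordAlgebra Q) l₂, -(ι Q v)])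
    (hbij : Function.Bijective g) :
    ∀ A : Matrix (Fin 2) (Fin 2) (CliffordAlgebra Q),
      ((∃ x : (CliffordAlgebra QW)ˣ,
          (∀ w : V × F × F, ∃ w' : V × F × F,
            (x : CliffordAlgebra QW) * ι QW w *
              involute (↑x⁻¹ : CliffordAlgebra QW) = ι QW w') ∧
          (x : CliffordAlgebra QW) * involute (reverse (x : CliffordAlgebra QW)) = 1 ∧
          g ↑x = A) ↔ VahlenCondsOne Q A) ∧
      ((VahlenCondsOne Q A ∧
          involute (A 0 0) = A 0 0 ∧ involute (A 1 1) = A 1 1 ∧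
          involute (A 0 1) = -(A 0 1) ∧ involute (A 1 0) = -(A 1 0)) →
        ∃ x : (CliffordAlgebra QW)ˣ,
          (∀ w : V × F × F, ∃ w' : V × F × F,
            (x : CliffordAlgebra QW) * ι QW w *
              involute (↑x⁻¹ : CliffordAlgebra QW) = ι QW w') ∧
          (x : CliffordAlgebra QW) * involute (reverse (x : CliffordAlgebra QW)) = 1 ∧
          involute (x : CliffordAlgebra QW) = (x : CliffordAlgebra QW) ∧
          g ↑x = A) := by
  have hinj : Function.Injective g := hbij.1
  intro A
  -- the backward construction
  have key : VahlenCondsOne Q A →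
      ∃ x : (CliffordAlgebra QW)ˣ,
        (∀ w : V × F × F, ∃ w' : V × F × F,
          (x : CliffordAlgebra QW) * ι QW w *
            involute (↑x⁻¹ : CliffordAlgebra QW) = ι QW w') ∧
        (x : CliffordAlgebra QW) * involute (reverse (x : CliffordAlgebra QW)) = 1 ∧
        g ↑x = A := by
    intro hA
    obtain ⟨⟨h1a, h1b⟩, ⟨h2a, h2b⟩, ⟨h3a, h3b⟩, ⟨h4a, h4b, h4c, h4d⟩, ⟨h5a, h5b⟩, h6, h7⟩ := hA
    have hrev1 : A 1 1 * reverse (A 0 0) - A 1 0 * reverse (A 0 1) = 1 := by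
      have h := congrArg reverse h1a
      simpa [reverse.map_mul] using h
    have hrev2 : reverse (A 0 0) * A 1 1 - reverse (A 1 0) * A 0 1 = 1 := by
      have h := congrArg reverse h1b
      simpa [reverse.map_mul] using h
    have hB1 : A * iMat (rMat A) = 1 := by
      ext i j
      fin_cases i <;> fin_cases j
      · simpa [iMat, rMat, bar, Matrix.mul_apply, Fin.sum_univ_two, Matrix.one_apply,
          sub_eq_add_neg] using h1a
      · simpa [iMat, rMat, bar, Matrix.mul_apply, Fin.sum_univ_two, Matrix.one_apply,
          sub_eq_add_neg, add_comm] using h2a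
      · simpa [iMat, rMat, bar, Matrix.mul_apply, Fin.sum_univ_two, Matrix.one_apply,
          sub_eq_add_neg] using h2b
      · simpa [iMat, rMat, bar, Matrix.mul_apply, Fin.sum_univ_two, Matrix.one_apply,
          sub_eq_add_neg, add_comm] using hrev1
    have hB2 : iMat (rMat A) * A = 1 := by
      ext i j
      fin_cases i <;> fin_cases j
      · simpa [iMat, rMat, bar, Matrix.mul_apply, Fin.sum_univ_two, Matrix.one_apply,
          sub_eq_add_neg] using h1b
      · simpa [iMat, rMat, bar, Matrix.mul_apply, Fin.sum_univ_two, Matrix.one_apply,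
          sub_eq_add_neg] using h3b
      · simpa [iMat, rMat, bar, Matrix.mul_apply, Fin.sum_univ_two, Matrix.one_apply,
          sub_eq_add_neg, add_comm] using h3a
      · simpa [iMat, rMat, bar, Matrix.mul_apply, Fin.sum_univ_two, Matrix.one_apply,
          sub_eq_add_neg, add_comm] using hrev2
    obtain ⟨x, hx⟩ := hbij.2 A
    have hgy : g (involute (reverse x)) = iMat (rMat A) := by
      rw [g_bar g hg, hx]
    have hxy : x * involute (reverse x) = 1 := by
      apply hinj
      rw [map_mul, hx, hgy, hB1, map_one]
    have hyx : involute (reverse x) * x = 1 := by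
      apply hinj
      rw [map_mul, hx, hgy, hB2, map_one]
    refine ⟨⟨x, involute (reverse x), hxy, hyx⟩, ?_, hxy, hx⟩
    intro w
    obtain ⟨v, l1, l2⟩ := w
    show ∃ w', x * ι QW (v, l1, l2) * involute (involute (reverse x)) = ι QW w'
    rw [involute_involute]
    have hM : g (x * ι QW (v, l1, l2) * reverse x)
        = A * !![ι Q v, algebraMap F (CliffordAlgebra Q) l1;
            algebraMap F (CliffordAlgebra Q) l2, -(ι Q v)] * rMat A := by
      rw [map_mul, map_mul, g_reverse g hg, hx, hg]
    obtain ⟨E00, E01, E10, E11⟩ := mul3_entries A (rMat A) v l1 l2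
    simp only [rMat_00, rMat_01, rMat_10, rMat_11] at E00 E01 E10 E11
    obtain ⟨w1, hw1⟩ := h7 v
    obtain ⟨s1, hs1⟩ := (h6 v).1
    obtain ⟨s2, hs2⟩ := (h6 v).2
    obtain ⟨v1, hv1⟩ := h5a
    obtain ⟨v2, hv2⟩ := h5b
    obtain ⟨sa, hsa⟩ := h4a
    obtain ⟨sb, hsb⟩ := h4b
    obtain ⟨sc, hsc⟩ := h4c
    obtain ⟨sd, hsd⟩ := h4d
    simp only [reverse_ι, involute_ι, mul_neg, neg_mul, ← sub_eq_add_neg] at hw1 hs1 hs2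
    have F00 : (A * !![ι Q v, algebraMap F (CliffordAlgebra Q) l1;
        algebraMap F (CliffordAlgebra Q) l2, -(ι Q v)] * rMat A) 0 0
        = ι Q (w1 + l2 • v1 + l1 • v2) := by
      rw [E00, hw1, hv1, hv2, map_add, map_add, map_smul, map_smul]
    have F01 : (A * !![ι Q v, algebraMap F (CliffordAlgebra Q) l1;
        algebraMap F (CliffordAlgebra Q) l2, -(ι Q v)] * rMat A) 0 1
        = algebraMap F (CliffordAlgebra Q) (s1 + l2 * sb + l1 * sa) := by
      rw [E01, hs1, hsb, hsa, map_add, map_add, map_mul, map_mul]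
      simp [Algebra.smul_def]
    have F10 : (A * !![ι Q v, algebraMap F (CliffordAlgebra Q) l1;
        algebraMap F (CliffordAlgebra Q) l2, -(ι Q v)] * rMat A) 1 0
        = algebraMap F (CliffordAlgebra Q) (s2 + l2 * sd + l1 * sc) := by
      rw [E10, hs2, hsd, hsc, map_add, map_add, map_mul, map_mul]
      simp [Algebra.smul_def]
    have F11 : (A * !![ι Q v, algebraMap F (CliffordAlgebra Q) l1;
        algebraMap F (CliffordAlgebra Q) l2, -(ι Q v)] * rMat A) 1 1
        = -ι Q (w1 + l2 • v1 + l1 • v2) := by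
      have h2 : reverse (x * ι QW (v, l1, l2) * reverse x)
          = x * ι QW (v, l1, l2) * reverse x := by
        simp [reverse.map_mul, mul_assoc]
      have h3 := congrArg g h2
      rw [g_reverse g hg, hM] at h3
      have h4 := congrArg (fun N => N 0 0) h3
      simp only [rMat_00] at h4
      -- h4 : involute (reverse (M 1 1)) = M 0 0
      have h5 : (A * !![ι Q v, algebraMap F (CliffordAlgebra Q) l1;
          algebraMap F (CliffordAlgebra Q) l2, -(ι Q v)] * rMat A) 1 1
          = involute (reverse ((A * !![ι Q v, algebraMap F (CliffordAlgebra Q) l1;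
            algebraMap F (CliffordAlgebra Q) l2, -(ι Q v)] * rMat A) 0 0)) := by
        rw [← h4, conj_conj]
      rw [h5, F00]
      simp
      abel
    refine ⟨(w1 + l2 • v1 + l1 • v2, s1 + l2 * sb + l1 * sa, s2 + l2 * sd + l1 * sc),
      hinj ?_⟩
    rw [hM, hg]
    ext i j
    fin_cases i <;> fin_cases j
    · simpa using F00
    · simpa using F01
    · simpa using F10
    · simpa using F11
  refine ⟨⟨?_, key⟩, ?_⟩
  · -- forward direction
    rintro ⟨x, hCG, hpin, hgx⟩
    have hxinv : (↑x⁻¹ : CliffordAlgebra QW) = involute (reverse (↑x : CliffordAlgebra QW)) :=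
      Units.inv_eq_of_mul_eq_one_right hpin
    have hyx : involute (reverse (↑x : CliffordAlgebra QW)) * ↑x = 1 := by
      rw [← hxinv]; exact x.inv_mul
    have hB1 : A * iMat (rMat A) = 1 := by
      rw [← hgx, ← g_bar g hg, ← map_mul, hpin, map_one]
    have hB2 : iMat (rMat A) * A = 1 := by
      rw [← hgx, ← g_bar g hg, ← map_mul, hyx, map_one]
    have hCG' : ∀ w, ∃ w', (↑x : CliffordAlgebra QW) * ι QW w * reverse ↑x = ι QW w' := by
      intro w
      obtain ⟨w', hw'⟩ := hCG w
      exact ⟨w', by rwa [hxinv, involute_involute] at hw'⟩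
    have hKE : ∀ (v : V) (l1 l2 : F), ∃ p : V × F × F,
        A * !![ι Q v, algebraMap F (CliffordAlgebra Q) l1;
          algebraMap F (CliffordAlgebra Q) l2, -(ι Q v)] * rMat A
        = !![ι Q p.1, algebraMap F (CliffordAlgebra Q) p.2.1;
            algebraMap F (CliffordAlgebra Q) p.2.2, -(ι Q p.1)] := by
      intro v l1 l2
      obtain ⟨w', hw'⟩ := hCG' (v, l1, l2)
      obtain ⟨wv, wl1, wl2⟩ := w'
      have e := congrArg g hw'
      rw [map_mul, map_mul, g_reverse g hg, hgx, hg, hg] at e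
      exact ⟨(wv, wl1, wl2), e⟩
    unfold VahlenCondsOne
    refine ⟨⟨?_, ?_⟩, ⟨?_, ?_⟩, ⟨?_, ?_⟩, ⟨?_, ?_, ?_, ?_⟩, ⟨?_, ?_⟩,
      fun v => ⟨?_, ?_⟩, fun v => ?_⟩
    · have e := congrArg (fun N => N 0 0) hB1
      simp [iMat, rMat, bar, Matrix.mul_apply, Fin.sum_univ_two, Matrix.one_apply] at e
      rw [← e]; noncomm_ring
    · have e := congrArg (fun N => N 0 0) hB2
      simp [iMat, rMat, bar, Matrix.mul_apply, Fin.sum_univ_two, Matrix.one_apply] at e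
      rw [← e]; noncomm_ring
    · have e := congrArg (fun N => N 0 1) hB1
      simp [iMat, rMat, bar, Matrix.mul_apply, Fin.sum_univ_two, Matrix.one_apply] at e
      rw [sub_eq_zero]
      simp only [neg_add_eq_zero, add_neg_eq_zero] at e
      first | exact e | exact e.symm
    · have e := congrArg (fun N => N 1 0) hB1
      simp [iMat, rMat, bar, Matrix.mul_apply, Fin.sum_univ_two, Matrix.one_apply] at e
      rw [sub_eq_zero]
      simp only [neg_add_eq_zero, add_neg_eq_zero] at e
      first | exact e | exact e.symm
    · have e := congrArg (fun N => N 1 0) hB2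
      simp [iMat, rMat, bar, Matrix.mul_apply, Fin.sum_univ_two, Matrix.one_apply] at e
      rw [sub_eq_zero]
      simp only [neg_add_eq_zero, add_neg_eq_zero] at e
      first | exact e | exact e.symm
    · have e := congrArg (fun N => N 0 1) hB2
      simp [iMat, rMat, bar, Matrix.mul_apply, Fin.sum_univ_two, Matrix.one_apply] at e
      rw [sub_eq_zero]
      simp only [neg_add_eq_zero, add_neg_eq_zero] at e
      first | exact e | exact e.symm
    · obtain ⟨p, hp⟩ := hKE 0 1 0
      have e := congrArg (fun N => N 0 1) hp
      simp [rMat, bar, Matrix.mul_apply, Fin.sum_univ_two] at e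
      exact ⟨p.2.1, by rw [← e]⟩
    · obtain ⟨p, hp⟩ := hKE 0 0 1
      have e := congrArg (fun N => N 0 1) hp
      simp [rMat, bar, Matrix.mul_apply, Fin.sum_univ_two] at e
      exact ⟨p.2.1, by rw [← e]⟩
    · obtain ⟨p, hp⟩ := hKE 0 1 0
      have e := congrArg (fun N => N 1 0) hp
      simp [rMat, bar, Matrix.mul_apply, Fin.sum_univ_two] at e
      exact ⟨p.2.2, by rw [← e]⟩
    · obtain ⟨p, hp⟩ := hKE 0 0 1
      have e := congrArg (fun N => N 1 0) hp
      simp [rMat, bar, Matrix.mul_apply, Fin.sum_univ_two] at e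
      exact ⟨p.2.2, by rw [← e]⟩
    · obtain ⟨p, hp⟩ := hKE 0 0 1
      have e := congrArg (fun N => N 0 0) hp
      simp [rMat, bar, Matrix.mul_apply, Fin.sum_univ_two] at e
      exact ⟨p.1, by rw [← e]⟩
    · obtain ⟨p, hp⟩ := hKE 0 1 0
      have e := congrArg (fun N => N 0 0) hp
      simp [rMat, bar, Matrix.mul_apply, Fin.sum_univ_two] at e
      exact ⟨p.1, by rw [← e]⟩
    · obtain ⟨p, hp⟩ := hKE v 0 0
      have e := congrArg (fun N => N 0 1) hp
      simp [rMat, bar, Matrix.mul_apply, Fin.sum_univ_two] at e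
      refine ⟨p.2.1, ?_⟩
      simp only [reverse_ι, involute_ι, mul_neg, neg_mul, ← sub_eq_add_neg]
      rw [← e]; noncomm_ring
    · obtain ⟨p, hp⟩ := hKE v 0 0
      have e := congrArg (fun N => N 1 0) hp
      simp [rMat, bar, Matrix.mul_apply, Fin.sum_univ_two] at e
      refine ⟨p.2.2, ?_⟩
      simp only [reverse_ι, involute_ι, mul_neg, neg_mul, ← sub_eq_add_neg]
      rw [← e]; noncomm_ring
    · obtain ⟨p, hp⟩ := hKE v 0 0
      have e := congrArg (fun N => N 0 0) hp
      simp [rMat, bar, Matrix.mul_apply, Fin.sum_univ_two] at e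
      refine ⟨p.1, ?_⟩
      simp only [reverse_ι, involute_ι, mul_neg, neg_mul, ← sub_eq_add_neg]
      rw [← e]; noncomm_ring
  · rintro ⟨hA, hp00, hp11, hp01, hp10⟩
    obtain ⟨x, hCG, hpin, hgx⟩ := key hA
    refine ⟨x, hCG, hpin, ?_, hgx⟩
    apply hinj
    rw [g_involute g hg, hgx]
    ext i j
    fin_cases i <;> fin_cases j <;> simp [iMat, hp00, hp11, hp01, hp10]
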